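/- For ε ∈ Sym₂(ℝ²) and ϑ ∈ ℝ², define h(ε,ϑ) = sup over ψ ∈ ℝ and unit vectors τ ∈ ℝ² of (ε:(τ⊗τ) + ψ·(ϑ·τ))/(1 + ψ²). Then h(ε,ϑ) ≤ 1 if and only if (1/4)·ϑ⊗ϑ + ε ⪯ I. -/

import Mathlib

/-!
For fixed `τ`, write `q = ε:(τ⊗τ)` and `b = ϑ·τ`. Then `q + ψ b ≤ 1 + ψ²` holds for every `ψ`
exactly when `q + b²/4 ≤ 1`: take `ψ = b/2`, and conversely `ψ b ≤ ψ² + b²/4`. Hence `h ≤ 1`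
says that the quadratic form of `¼ ϑ⊗ϑ + ε` is at most `1` on the unit ball, which by
homogeneity is `¼ ϑ⊗ϑ + ε ⪯ I`.
-/

open Matrix

/-- Frobenius inner product of 2×2 matrices. -/
def frob2 (A B : Matrix (Fin 2) (Fin 2) ℝ) : ℝ := ∑ i, ∑ j, A i j * B i j

lemma add_mul_le_one_add_sq_iff {q b : ℝ} :
    (∀ ψ : ℝ, q + ψ * b ≤ 1 + ψ ^ 2) ↔ q + b ^ 2 / 4 ≤ 1 :=
  ⟨fun h => by nlinarith [h (b / 2)], fun h ψ => by nlinarith [sq_nonneg (ψ - b / 2)]⟩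

lemma add_mul_div_one_add_sq_le (q b ψ : ℝ) : (q + ψ * b) / (1 + ψ ^ 2) ≤ |q| + |b| / 2 := by
  rw [div_le_iff₀ (by positivity)]
  have hq : q ≤ |q| * (1 + ψ ^ 2) := by nlinarith [le_abs_self q, abs_nonneg q, sq_nonneg ψ]
  have hψb : ψ * b ≤ |ψ| * |b| := by rw [← abs_mul]; exact le_abs_self _
  nlinarith [sq_nonneg (|ψ| - 1), sq_abs ψ, abs_nonneg b]

lemma isHermitian_vecMulVec_self {n : Type*} (v : n → ℝ) : (vecMulVec v v).IsHermitian := by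
  rw [IsHermitian, conjTranspose_vecMulVec, star_trivial]

section

variable {n : Type*} [Fintype n]

lemma abs_le_one_of_dotProduct_self_le_one {τ : n → ℝ} (hτ : τ ⬝ᵥ τ ≤ 1) (i : n) :
    |τ i| ≤ 1 := by
  have : τ i ^ 2 ≤ τ ⬝ᵥ τ := by
    rw [dotProduct, sq]
    exact Finset.single_le_sum (fun j _ => mul_self_nonneg (τ j)) (Finset.mem_univ i)
  exact sq_le_one_iff_abs_le_one _ |>.1 (this.trans hτ)

lemma abs_dotProduct_le_sum_abs (v : n → ℝ) {τ : n → ℝ} (hτ : τ ⬝ᵥ τ ≤ 1) :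
    |v ⬝ᵥ τ| ≤ ∑ i, |v i| :=
  calc |v ⬝ᵥ τ| ≤ ∑ i, |v i * τ i| := Finset.abs_sum_le_sum_abs _ _
    _ ≤ ∑ i, |v i| := Finset.sum_le_sum fun i _ => by
        rw [abs_mul]
        exact mul_le_of_le_one_right (abs_nonneg _) (abs_le_one_of_dotProduct_self_le_one hτ i)

lemma abs_dotProduct_mulVec_le_sum_abs (A : Matrix n n ℝ) {τ : n → ℝ} (hτ : τ ⬝ᵥ τ ≤ 1) :
    |τ ⬝ᵥ A *ᵥ τ| ≤ ∑ i, ∑ j, |A i j| :=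
  calc |τ ⬝ᵥ A *ᵥ τ| = |(A *ᵥ τ) ⬝ᵥ τ| := by rw [dotProduct_comm]
    _ ≤ ∑ i, |(A *ᵥ τ) i| := abs_dotProduct_le_sum_abs _ hτ
    _ ≤ ∑ i, ∑ j, |A i j| := Finset.sum_le_sum fun i _ => abs_dotProduct_le_sum_abs (A i) hτ

lemma smul_dotProduct_mulVec_smul (A : Matrix n n ℝ) (c : ℝ) (x : n → ℝ) :
    (c • x) ⬝ᵥ A *ᵥ (c • x) = c ^ 2 * (x ⬝ᵥ A *ᵥ x) := by
  rw [mulVec_smul, smul_dotProduct, dotProduct_smul, smul_eq_mul, smul_eq_mul]; ring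

lemma forall_dotProduct_mulVec_le_one_iff (A : Matrix n n ℝ) :
    (∀ τ : n → ℝ, τ ⬝ᵥ τ ≤ 1 → τ ⬝ᵥ A *ᵥ τ ≤ 1) ↔ ∀ x : n → ℝ, x ⬝ᵥ A *ᵥ x ≤ x ⬝ᵥ x := by
  refine ⟨fun h x => ?_, fun h τ hτ => (h τ).trans hτ⟩
  obtain rfl | hx := eq_or_ne x 0
  · simp
  · have hpos : 0 < x ⬝ᵥ x := by simpa using dotProduct_self_star_pos_iff.2 hx
    set r := √(x ⬝ᵥ x)
    have hr : r ^ 2 = x ⬝ᵥ x := Real.sq_sqrt hpos.le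
    have hr0 : r ≠ 0 := (Real.sqrt_pos.2 hpos).ne'
    have hunit : (r⁻¹ • x) ⬝ᵥ (r⁻¹ • x) = 1 := by
      rw [smul_dotProduct, dotProduct_smul, smul_eq_mul, smul_eq_mul, ← mul_assoc, ← sq,
        ← hr, inv_pow, inv_mul_cancel₀ (pow_ne_zero 2 hr0)]
    have := h _ hunit.le
    rw [smul_dotProduct_mulVec_smul, inv_pow, hr, inv_mul_le_iff₀ hpos, mul_one] at this
    exact this

lemma posSemidef_one_sub_iff [DecidableEq n] {A : Matrix n n ℝ} (hA : A.IsHermitian) :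
    (1 - A).PosSemidef ↔ ∀ x : n → ℝ, x ⬝ᵥ A *ᵥ x ≤ x ⬝ᵥ x := by
  rw [posSemidef_iff_dotProduct_mulVec]
  simp only [star_trivial, sub_mulVec, one_mulVec, dotProduct_sub, sub_nonneg]
  exact and_iff_right (isHermitian_one.sub hA)

lemma dotProduct_vecMulVec_self_mulVec (v τ : n → ℝ) :
    τ ⬝ᵥ vecMulVec v v *ᵥ τ = (v ⬝ᵥ τ) ^ 2 := by
  rw [vecMulVec_mulVec]; simp [dotProduct_comm, sq]

theorem sSup_le_one_iff_posSemidef_one_sub [DecidableEq n] {ε : Matrix n n ℝ}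
    (hε : ε.IsHermitian) (ϑ : n → ℝ) :
    sSup {x : ℝ | ∃ ψ : ℝ, ∃ τ : n → ℝ, τ ⬝ᵥ τ ≤ 1 ∧
        x = (τ ⬝ᵥ ε *ᵥ τ + ψ * (ϑ ⬝ᵥ τ)) / (1 + ψ ^ 2)} ≤ 1 ↔
      (1 - ((1/4 : ℝ) • vecMulVec ϑ ϑ + ε)).PosSemidef := by
  set S := {x : ℝ | ∃ ψ : ℝ, ∃ τ : n → ℝ, τ ⬝ᵥ τ ≤ 1 ∧
    x = (τ ⬝ᵥ ε *ᵥ τ + ψ * (ϑ ⬝ᵥ τ)) / (1 + ψ ^ 2)}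
  have hne : S.Nonempty := ⟨0, 0, 0, by simp⟩
  -- needed: an unbounded `S` would have the junk supremum `0`
  have hbdd : BddAbove S := by
    refine ⟨(∑ i, ∑ j, |ε i j|) + (∑ i, |ϑ i|) / 2, ?_⟩
    rintro _ ⟨ψ, τ, hτ, rfl⟩
    refine (add_mul_div_one_add_sq_le _ _ ψ).trans ?_
    gcongr
    exacts [abs_dotProduct_mulVec_le_sum_abs ε hτ, abs_dotProduct_le_sum_abs ϑ hτ]
  have hM : ((1/4 : ℝ) • vecMulVec ϑ ϑ + ε).IsHermitian :=
    ((isHermitian_vecMulVec_self ϑ).smul (IsSelfAdjoint.all _)).add hε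
  have hquad (τ : n → ℝ) :
      τ ⬝ᵥ ((1/4 : ℝ) • vecMulVec ϑ ϑ + ε) *ᵥ τ = τ ⬝ᵥ ε *ᵥ τ + (ϑ ⬝ᵥ τ) ^ 2 / 4 := by
    rw [add_mulVec, smul_mulVec, dotProduct_add, dotProduct_smul,
      dotProduct_vecMulVec_self_mulVec, smul_eq_mul]
    ring
  rw [csSup_le_iff hbdd hne, posSemidef_one_sub_iff hM, ← forall_dotProduct_mulVec_le_one_iff]
  simp only [hquad, ← add_mul_le_one_add_sq_iff]
  constructor
  · intro h τ hτ ψ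
    simpa only [div_le_one (by positivity : (0 : ℝ) < 1 + ψ ^ 2)] using h _ ⟨ψ, τ, hτ, rfl⟩
  · rintro h _ ⟨ψ, τ, hτ, rfl⟩
    exact (div_le_one (by positivity)).2 (h τ hτ ψ)

end

lemma frob2_vecMulVec_self (A : Matrix (Fin 2) (Fin 2) ℝ) (τ : Fin 2 → ℝ) :
    frob2 A (vecMulVec τ τ) = τ ⬝ᵥ A *ᵥ τ := by
  simp only [frob2, vecMulVec_apply, Fin.sum_univ_two, dotProduct, mulVec]
  ring

/-- h(ε,ϑ) = sup over ψ ∈ ℝ, |τ| ≤ 1 of (ε:(τ⊗τ) + ψ(ϑ·τ))/(1+ψ²) satisfies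
    h(ε,ϑ) ≤ 1 ↔ (1/4)ϑ⊗ϑ + ε ⪯ I. -/
theorem stmt3 (ε : Matrix (Fin 2) (Fin 2) ℝ) (ϑ : Fin 2 → ℝ) (hε : ε.IsHermitian) :
    sSup {x : ℝ | ∃ ψ : ℝ, ∃ τ : Fin 2 → ℝ, (∑ i, τ i ^ 2) ≤ 1 ∧
        x = (frob2 ε (Matrix.vecMulVec τ τ) + ψ * (ϑ ⬝ᵥ τ)) / (1 + ψ ^ 2)} ≤ 1 ↔
      ((1 : Matrix (Fin 2) (Fin 2) ℝ) -
        ((1/4 : ℝ) • Matrix.vecMulVec ϑ ϑ + ε)).PosSemidef := by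
  have hsum (τ : Fin 2 → ℝ) : ∑ i, τ i ^ 2 = τ ⬝ᵥ τ := by simp only [dotProduct, sq]
  simp only [frob2_vecMulVec_self, hsum]
  exact sSup_le_one_iff_posSemidef_one_sub hε ϑ
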